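/- arXiv:2106.02438 — 8 statements merged into one kernel-verified Lean document; each statement's English description precedes it below -/
import Mathlib

section
/- (Turán's theorem, edge-count form) Let G be a finite graph with independence number α, and let l > α. Then every set W of l vertices of G induces at least l²/(2α) − l/2 edges. -/
/-- The Johnson-type graph `G(n,r,s)`: vertices are the `r`-element subsets of
`{1,…,n}` (modeled as `Finset (Fin n)` of cardinality `r`), two distinct vertices
adjacent iff their intersection has size exactly `s`. -/
def johnson (n r s : ℕ) : SimpleGraph {A : Finset (Fin n) // A.card = r} where
  Adj A B := A ≠ B ∧ (A.1 ∩ B.1).card = s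
  symm := by
    constructor
    intro A B h
    exact ⟨h.1.symm, by rw [Finset.inter_comm]; exact h.2⟩
  loopless := by constructor; intro A h; exact h.1 rfl

instance (n r s : ℕ) : DecidableRel (johnson n r s).Adj := fun A B =>
  inferInstanceAs (Decidable (A ≠ B ∧ (A.1 ∩ B.1).card = s))

/-- `Γ` is an independent set of vertices in `G`. -/
def IsIndep {V : Type*} (G : SimpleGraph V) (Γ : Finset V) : Prop :=
  ∀ x ∈ Γ, ∀ y ∈ Γ, ¬ G.Adj x y

/-- The number of edges of `G` with both endpoints in `W`. -/
def edgeCount {V : Type*} [DecidableEq V] (G : SimpleGraph V) [DecidableRel G.Adj]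
    (W : Finset V) : ℕ :=
  ((W ×ˢ W).filter fun p => G.Adj p.1 p.2).card / 2

/-! Inside `W`, an `(α + 1)`-clique of the complement of `G[W]` would be an independent set of `G`,
so by Turán's theorem this complement has at most `(1 - 1/α) l² / 2` edges. Hence `G[W]` has at
least `l (l - 1) / 2 - (1 - 1/α) l² / 2 = l² / (2α) - l / 2` edges. -/

open Finset

namespace SimpleGraph

variable {V : Type*}

theorem card_edgeFinset_add_card_edgeFinset_compl [Fintype V] [DecidableEq V]
    (G : SimpleGraph V) [DecidableRel G.Adj] :
    #G.edgeFinset + #Gᶜ.edgeFinset = (Fintype.card V).choose 2 := by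
  rw [← card_union_of_disjoint (disjoint_edgeFinset.mpr disjoint_compl_right), ← edgeFinset_sup]
  convert card_edgeFinset_top_eq_card_choose_two (V := V)
  exact sup_compl_eq_top

theorem CliqueFree.two_mul_mul_card_edgeFinset_le [Fintype V] {G : SimpleGraph V}
    [DecidableRel G.Adj] {r : ℕ} (h : G.CliqueFree (r + 1)) :
    2 * r * #G.edgeFinset ≤ (r - 1) * Fintype.card V ^ 2 := by
  rcases r with _ | r
  · simp
  rw [← Fintype.card_fin (r + 1 + 1), cliqueFree_iff_top_free] at h
  grw [card_edgeFinset_le_extremalNumber h, extremalNumber_top, Fintype.card_fin,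
    Nat.add_sub_cancel]
  exact mul_card_edgeFinset_turanGraph_le

theorem card_filter_adj_product_eq_two_mul_card_edgeFinset_induce [DecidableEq V]
    (G : SimpleGraph V) [DecidableRel G.Adj] (W : Finset V) :
    #((W ×ˢ W).filter fun p => G.Adj p.1 p.2) = 2 * #(G.induce (W : Set V)).edgeFinset := by
  rw [← dart_card_eq_twice_card_edges, ← card_univ]
  symm
  refine card_bij' (fun d _ => (d.fst.1, d.snd.1))
    (fun p hp => ⟨(⟨p.1, ?_⟩, ⟨p.2, ?_⟩), (mem_filter.mp hp).2⟩) (fun d _ => ?_) ?_ ?_ ?_ <;>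
    simp_all
  exact d.adj

end SimpleGraph

open SimpleGraph

theorem edgeCount_eq_card_edgeFinset_induce {V : Type*} [DecidableEq V] (G : SimpleGraph V)
    [DecidableRel G.Adj] (W : Finset V) :
    edgeCount G W = #(G.induce (W : Set V)).edgeFinset := by
  rw [edgeCount, card_filter_adj_product_eq_two_mul_card_edgeFinset_induce,
    Nat.mul_div_cancel_left _ two_pos]

theorem cliqueFree_compl_induce_of_forall_isIndep_card_le {V : Type*} {G : SimpleGraph V}
    {α : ℕ} (hα : ∀ Γ : Finset V, IsIndep G Γ → Γ.card ≤ α) (s : Set V) :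
    (G.induce s)ᶜ.CliqueFree (α + 1) := by
  intro t ht
  have hle := hα (t.map (Function.Embedding.subtype _)) ?_
  · simp [ht.card_eq] at hle
  · simp only [IsIndep, mem_map]
    rintro _ ⟨x, hx, rfl⟩ _ ⟨y, hy, rfl⟩ hxy
    have hne : x ≠ y := by rintro rfl; exact G.loopless.irrefl _ hxy
    exact (ht.isClique hx hy hne).2 hxy

theorem stmt1_general {V : Type*} [DecidableEq V] (G : SimpleGraph V)
    [DecidableRel G.Adj] (α l : ℕ)
    (hα_max : ∀ Γ : Finset V, IsIndep G Γ → Γ.card ≤ α)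
    (W : Finset V) (hW : W.card = l) :
    (l : ℝ) ^ 2 / (2 * α) - l / 2 ≤ (edgeCount G W : ℝ) := by
  rcases α with _ | α
  · simp only [CharP.cast_eq_zero, mul_zero, div_zero, zero_sub]
    have : (0 : ℝ) ≤ l / 2 := by positivity
    linarith [Nat.cast_nonneg (α := ℝ) (edgeCount G W)]
  rw [edgeCount_eq_card_edgeFinset_induce]
  set H := G.induce (W : Set V)
  have hcard : Fintype.card (W : Set V) = l := by simp [hW]
  have hsum : (#H.edgeFinset + #Hᶜ.edgeFinset : ℝ) = l * (l - 1) / 2 := by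
    rw [← Nat.cast_choose_two, ← hcard]
    exact_mod_cast H.card_edgeFinset_add_card_edgeFinset_compl
  have hturan : (2 * (α + 1) * #Hᶜ.edgeFinset : ℝ) ≤ α * l ^ 2 := by
    have := (cliqueFree_compl_induce_of_forall_isIndep_card_le hα_max
      (W : Set V)).two_mul_mul_card_edgeFinset_le
    rw [hcard, Nat.add_sub_cancel] at this
    exact_mod_cast this
  rw [div_sub' (by positivity), div_le_iff₀ (by positivity)]
  push_cast
  linear_combination hturan - 2 * (α + 1) * hsum

theorem stmt1 {V : Type*} [Fintype V] [DecidableEq V] (G : SimpleGraph V)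
    [DecidableRel G.Adj] (α l : ℕ)
    (hα_ex : ∃ Γ : Finset V, IsIndep G Γ ∧ Γ.card = α)
    (hα_max : ∀ Γ : Finset V, IsIndep G Γ → Γ.card ≤ α)
    (hl : α < l) (W : Finset V) (hW : W.card = l) :
    (l : ℝ) ^ 2 / (2 * α) - l / 2 ≤ (edgeCount G W : ℝ) :=
  stmt1_general G α l hα_max W hW
end

section
/- Let Γ be a maximum-size independent set in the subgraph of G(n,r,s) induced on a vertex set W, and let u ∈ Γ. If v₁, v₂ ∈ W \ Γ are distinct vertices, each adjacent to exactly one vertex of Γ (namely u), and supp(v₁) and supp(v₂) agree in at least s+1 elements, then v₁ and v₂ are not adjacent and (Γ \ {u}) ∪ {v₁, v₂} is an independent set of size |Γ| + 1, a contradiction; hence no two such vertices exist. -/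
/-! Replacing `u` by `v₁` and `v₂` in `Γ` keeps it independent, since `u` is the only
neighbour of each `vᵢ` in `Γ` and `v₁, v₂` meet in more than `s` elements; this beats
the maximality of `Γ`. -/

open Finset

theorem johnson_not_adj_of_lt_card_inter {n r s : ℕ} {A B : {A : Finset (Fin n) // A.card = r}}
    (h : s < (A.1 ∩ B.1).card) : ¬ (johnson n r s).Adj A B :=
  fun hadj => h.ne' hadj.2

namespace IsIndep

variable {V : Type*} {G : SimpleGraph V}

theorem mono {Γ Γ' : Finset V} (h : IsIndep G Γ) (hsub : Γ' ⊆ Γ) : IsIndep G Γ' :=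
  fun x hx y hy => h x (hsub hx) y (hsub hy)

protected theorem insert [DecidableEq V] {Γ : Finset V} {v : V} (h : IsIndep G Γ)
    (hv : ∀ x ∈ Γ, ¬ G.Adj x v) : IsIndep G (insert v Γ) := by
  intro x hx y hy
  rcases mem_insert.1 hx with rfl | hxΓ <;> rcases mem_insert.1 hy with rfl | hyΓ
  · exact G.irrefl
  · exact fun hadj => hv y hyΓ hadj.symm
  · exact hv x hxΓ
  · exact h x hxΓ y hyΓ

theorem insert_insert_erase [DecidableEq V] [DecidableRel G.Adj] {Γ : Finset V} {u v₁ v₂ : V}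
    (h : IsIndep G Γ) (hv : ¬ G.Adj v₁ v₂) (h₁ : Γ.filter (G.Adj · v₁) ⊆ {u})
    (h₂ : Γ.filter (G.Adj · v₂) ⊆ {u}) : IsIndep G (insert v₁ (insert v₂ (Γ.erase u))) := by
  have only_u : ∀ {v}, Γ.filter (G.Adj · v) ⊆ {u} → ∀ x ∈ Γ.erase u, ¬ G.Adj x v :=
    fun hsub x hx hadj =>
      ne_of_mem_erase hx (mem_singleton.1 (hsub (mem_filter.2 ⟨mem_of_mem_erase hx, hadj⟩)))
  refine (h.mono (erase_subset u Γ) |>.insert (only_u h₂)).insert ?_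
  intro x hx
  rcases mem_insert.1 hx with rfl | hx
  · exact fun hadj => hv hadj.symm
  · exact only_u h₁ x hx

end IsIndep

theorem card_insert_insert_erase {α : Type*} [DecidableEq α] {Γ : Finset α} {u v₁ v₂ : α}
    (hu : u ∈ Γ) (hv₁ : v₁ ∉ Γ) (hv₂ : v₂ ∉ Γ) (hne : v₁ ≠ v₂) :
    (insert v₁ (insert v₂ (Γ.erase u))).card = Γ.card + 1 := by
  have hv₁' : v₁ ∉ insert v₂ (Γ.erase u) := by
    simp only [mem_insert, mem_erase]
    tauto
  rw [card_insert_of_notMem hv₁', card_insert_of_notMem fun h => hv₂ (mem_of_mem_erase h),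
    card_erase_add_one hu]

theorem stmt2 (n r s : ℕ)
    (W Γ : Finset {A : Finset (Fin n) // A.card = r})
    (hΓW : Γ ⊆ W) (hind : IsIndep (johnson n r s) Γ)
    (hmax : ∀ Γ' ⊆ W, IsIndep (johnson n r s) Γ' → Γ'.card ≤ Γ.card)
    (u : {A : Finset (Fin n) // A.card = r}) (hu : u ∈ Γ)
    (v₁ v₂ : {A : Finset (Fin n) // A.card = r})
    (hv₁ : v₁ ∈ W \ Γ) (hv₂ : v₂ ∈ W \ Γ) (hne : v₁ ≠ v₂)
    (h1 : Γ.filter (fun x => (johnson n r s).Adj x v₁) = {u})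
    (h2 : Γ.filter (fun x => (johnson n r s).Adj x v₂) = {u})
    (hagree : s + 1 ≤ (v₁.1 ∩ v₂.1).card) : False := by
  obtain ⟨hv₁W, hv₁Γ⟩ := mem_sdiff.1 hv₁
  obtain ⟨hv₂W, hv₂Γ⟩ := mem_sdiff.1 hv₂
  have hindep := hind.insert_insert_erase (johnson_not_adj_of_lt_card_inter hagree) h1.le h2.le
  have hsub : insert v₁ (insert v₂ (Γ.erase u)) ⊆ W :=
    insert_subset hv₁W (insert_subset hv₂W ((erase_subset u Γ).trans hΓW))
  have hle := hmax _ hsub hindep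
  rw [card_insert_insert_erase hu hv₁Γ hv₂Γ hne] at hle
  omega
end

section
/- Fix r and s with r = 2s+1. Let Γ be a maximum independent set in the induced subgraph of G(n,r,s) on W. For u ∈ Γ, let U_{1,u} be the set of w ∈ W \ Γ whose unique neighbor in Γ is u. Then |U_{1,u}| ≤ C(r,s) · (n − r), where C(r,s) is the binomial coefficient 'r choose s'. -/
/-!
By maximality of `Γ`, the private neighbours of `u` are pairwise adjacent: two non-adjacent ones
could replace `u` in `Γ`. Group such a clique of neighbours of `u` by the trace `w ∩ u`, an
`s`-subset of `u`. Two members with the same trace meet in a superset of it, of size exactly `s`,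
so they meet only in the trace; hence the sets `w \ u` of one group are pairwise disjoint nonempty
subsets of the `n - r` points outside `u`.
-/

open Finset

section PrivateNeighbors

variable {V : Type*} [DecidableEq V]

theorem isIndep_insert {G : SimpleGraph V} {a : V} {s : Finset V} :
    IsIndep G (insert a s) ↔ IsIndep G s ∧ ∀ y ∈ s, ¬ G.Adj a y := by
  simp only [IsIndep, mem_insert, forall_eq_or_imp, G.irrefl, not_false_eq_true, true_and]
  constructor
  · rintro ⟨ha, hs⟩
    exact ⟨fun x hx y hy => (hs x hx).2 y hy, ha⟩
  · rintro ⟨hs, ha⟩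
    exact ⟨ha, fun x hx => ⟨fun h => ha x hx h.symm, hs x hx⟩⟩

variable (G : SimpleGraph V) [DecidableRel G.Adj]

/-- The set `U_{1,u}`. -/
def privateNeighbors (W Γ : Finset V) (u : V) : Finset V :=
  (W \ Γ).filter fun w => Γ.filter (fun x => G.Adj x w) = {u}

variable {G}

theorem mem_privateNeighbors {W Γ : Finset V} {u w : V} :
    w ∈ privateNeighbors G W Γ u ↔ w ∈ W ∧ w ∉ Γ ∧ ∀ x, x ∈ Γ ∧ G.Adj x w ↔ x = u := by
  simp [privateNeighbors, Finset.ext_iff, and_assoc]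

theorem adj_of_mem_privateNeighbors {W Γ : Finset V} {u w : V}
    (hw : w ∈ privateNeighbors G W Γ u) : G.Adj u w :=
  ((mem_privateNeighbors.mp hw).2.2 u).mpr rfl |>.2

theorem isClique_privateNeighbors {W Γ : Finset V} (hΓW : Γ ⊆ W) (hind : IsIndep G Γ)
    (hmax : ∀ Γ' ⊆ W, IsIndep G Γ' → Γ'.card ≤ Γ.card) {u : V} (hu : u ∈ Γ) :
    G.IsClique (privateNeighbors G W Γ u : Set V) := by
  intro w hw w' hw' hne
  by_contra hnadj
  obtain ⟨hwW, hwΓ, hwu⟩ := mem_privateNeighbors.mp hw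
  obtain ⟨hw'W, hw'Γ, hw'u⟩ := mem_privateNeighbors.mp hw'
  have hfar : ∀ v, (∀ x, x ∈ Γ ∧ G.Adj x v ↔ x = u) → ∀ x ∈ Γ.erase u, ¬ G.Adj v x :=
    fun v hv x hx hvx => ne_of_mem_erase hx ((hv x).mp ⟨mem_of_mem_erase hx, hvx.symm⟩)
  have hsub : insert w (insert w' (Γ.erase u)) ⊆ W :=
    insert_subset hwW (insert_subset hw'W ((erase_subset u Γ).trans hΓW))
  have hindep : IsIndep G (insert w (insert w' (Γ.erase u))) := by
    refine isIndep_insert.mpr ⟨isIndep_insert.mpr ⟨?_, hfar w' hw'u⟩, ?_⟩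
    · exact fun x hx y hy => hind x (mem_of_mem_erase hx) y (mem_of_mem_erase hy)
    · simpa only [mem_insert, forall_eq_or_imp] using ⟨hnadj, hfar w hwu⟩
  have hcard : (insert w (insert w' (Γ.erase u))).card = Γ.card + 1 := by
    rw [card_insert_of_notMem, card_insert_of_notMem, card_erase_add_one hu]
    · exact fun h => hw'Γ (mem_of_mem_erase h)
    · simpa [hne] using fun h => hwΓ (mem_of_mem_erase h)
  have := hmax _ hsub hindep
  omega

end PrivateNeighbors

section Johnson

variable {α : Type*} [DecidableEq α]

theorem disjoint_sdiff_of_inter_eq {A B C : Finset α} (hC : A ∩ C = B ∩ C)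
    (hcard : (A ∩ B).card ≤ (A ∩ C).card) : Disjoint (A \ C) (B \ C) := by
  have hAC : A ∩ C ⊆ A ∩ B := fun x hx =>
    mem_inter.mpr ⟨(mem_inter.mp hx).1, (mem_inter.mp (hC ▸ hx)).1⟩
  have hAB : A ∩ C = A ∩ B := eq_of_subset_of_card_le hAC hcard
  refine disjoint_left.mpr fun x hxA hxB => (mem_sdiff.mp hxA).2 ?_
  have : x ∈ A ∩ B := mem_inter.mpr ⟨(mem_sdiff.mp hxA).1, (mem_sdiff.mp hxB).1⟩
  exact (mem_inter.mp (hAB ▸ this)).2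

variable {n r s : ℕ}

theorem sdiff_nonempty_of_johnson_adj {u w : {A : Finset (Fin n) // A.card = r}}
    (h : (johnson n r s).Adj u w) : (w.1 \ u.1).Nonempty :=
  sdiff_nonempty.mpr fun hwu =>
    h.1 (Subtype.ext (eq_of_subset_of_card_le hwu (by rw [u.2, w.2])).symm)

theorem card_clique_le_of_adj {u : {A : Finset (Fin n) // A.card = r}}
    {U : Finset {A : Finset (Fin n) // A.card = r}} (hU : (johnson n r s).IsClique (U : Set _))
    (hadj : ∀ w ∈ U, (johnson n r s).Adj u w) :
    U.card ≤ Nat.choose r s * (n - r) := by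
  have htrace : ∀ w ∈ U, w.1 ∩ u.1 ∈ u.1.powersetCard s := fun w hw =>
    mem_powersetCard.mpr ⟨inter_subset_right, by rw [inter_comm]; exact (hadj w hw).2⟩
  have hfiber : ∀ S ∈ u.1.powersetCard s, (U.filter fun w => w.1 ∩ u.1 = S).card ≤ n - r := by
    intro S _
    set F := U.filter fun w => w.1 ∩ u.1 = S
    have hdisj :
        (F : Set {A : Finset (Fin n) // A.card = r}).PairwiseDisjoint fun w => w.1 \ u.1 := by
      intro w hw w' hw' hne
      obtain ⟨hwU, hwS⟩ := mem_filter.mp hw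
      obtain ⟨hw'U, hw'S⟩ := mem_filter.mp hw'
      refine disjoint_sdiff_of_inter_eq (hwS.trans hw'S.symm) ?_
      rw [(hU hwU hw'U hne).2, inter_comm, (hadj w hwU).2]
    calc F.card ≤ (F.biUnion fun w => w.1 \ u.1).card :=
          card_le_card_biUnion hdisj fun w hw =>
            sdiff_nonempty_of_johnson_adj (hadj w (filter_subset _ _ hw))
      _ ≤ u.1ᶜ.card :=
          card_le_card (biUnion_subset.mpr fun _ _ _ hx => mem_compl.mpr (mem_sdiff.mp hx).2)
      _ = n - r := by rw [card_compl, u.2, Fintype.card_fin]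
  calc U.card ≤ (n - r) * (u.1.powersetCard s).card :=
        card_le_mul_card_image_of_maps_to htrace _ hfiber
    _ = Nat.choose r s * (n - r) := by rw [card_powersetCard, u.2, mul_comm]

end Johnson

theorem stmt4_general (n r s : ℕ)
    (W Γ : Finset {A : Finset (Fin n) // A.card = r})
    (hΓW : Γ ⊆ W) (hind : IsIndep (johnson n r s) Γ)
    (hmax : ∀ Γ' ⊆ W, IsIndep (johnson n r s) Γ' → Γ'.card ≤ Γ.card)
    (u : {A : Finset (Fin n) // A.card = r}) (hu : u ∈ Γ) :
    ((W \ Γ).filter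
        (fun w => Γ.filter (fun x => (johnson n r s).Adj x w) = {u})).card
      ≤ Nat.choose r s * (n - r) := by
  change (privateNeighbors (johnson n r s) W Γ u).card ≤ _
  exact card_clique_le_of_adj (isClique_privateNeighbors hΓW hind hmax hu)
    fun _ => adj_of_mem_privateNeighbors

theorem stmt4 (n r s : ℕ) (hr : r = 2 * s + 1)
    (W Γ : Finset {A : Finset (Fin n) // A.card = r})
    (hΓW : Γ ⊆ W) (hind : IsIndep (johnson n r s) Γ)
    (hmax : ∀ Γ' ⊆ W, IsIndep (johnson n r s) Γ' → Γ'.card ≤ Γ.card)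
    (u : {A : Finset (Fin n) // A.card = r}) (hu : u ∈ Γ) :
    ((W \ Γ).filter
        (fun w => Γ.filter (fun x => (johnson n r s).Adj x w) = {u})).card
      ≤ Nat.choose r s * (n - r) :=
  stmt4_general n r s W Γ hΓW hind hmax u hu
end

section
/- In G(n,3,1), let Γ be a maximum independent set in the subgraph induced on a vertex set W, and let w ∈ W \ Γ have exactly one neighbor u ∈ Γ, so that |supp(w) ∩ supp(u)| = 1; then for a fixed 2-element subset T of supp(w) containing the intersection point of supp(w) with supp(u), there is at most one vertex v ∈ W \ Γ with unique Γ-neighbor u such that supp(v) ⊇ T. -/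
theorem stmt11 (n : ℕ)
    (W Γ : Finset {A : Finset (Fin n) // A.card = 3})
    (hΓW : Γ ⊆ W) (hind : IsIndep (johnson n 3 1) Γ)
    (hmax : ∀ Γ' ⊆ W, IsIndep (johnson n 3 1) Γ' → Γ'.card ≤ Γ.card)
    (u : {A : Finset (Fin n) // A.card = 3}) (hu : u ∈ Γ)
    (T : Finset (Fin n)) (hT : T.card = 2)
    (v₁ v₂ : {A : Finset (Fin n) // A.card = 3})
    (hv₁ : v₁ ∈ W \ Γ) (hv₂ : v₂ ∈ W \ Γ)
    (h1 : Γ.filter (fun x => (johnson n 3 1).Adj x v₁) = {u})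
    (h2 : Γ.filter (fun x => (johnson n 3 1).Adj x v₂) = {u})
    (hT1 : T ⊆ v₁.1) (hT2 : T ⊆ v₂.1)
    (hi1 : v₁.1 ∩ u.1 ⊆ T) (hi2 : v₂.1 ∩ u.1 ⊆ T) :
    v₁ = v₂ := by
  by_contra hne
  have hv1Γ : v₁ ∉ Γ := (Finset.mem_sdiff.mp hv₁).2
  have hv2Γ : v₂ ∉ Γ := (Finset.mem_sdiff.mp hv₂).2
  -- v₁ and v₂ are not adjacent
  have hcard12 : 2 ≤ (v₁.1 ∩ v₂.1).card := by
    calc 2 = T.card := hT.symm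
    _ ≤ _ := Finset.card_le_card (Finset.subset_inter hT1 hT2)
  have hnadj' : ¬ (johnson n 3 1).Adj v₁ v₂ := fun h => by
    have := h.2; omega
  -- elements of Γ other than u are not adjacent to v₁ or v₂
  have key : ∀ (v : {A : Finset (Fin n) // A.card = 3}),
      Γ.filter (fun x => (johnson n 3 1).Adj x v) = {u} →
      ∀ x ∈ Γ.erase u, ¬ (johnson n 3 1).Adj x v := by
    intro v hfil x hx hadj
    have hxΓ := Finset.mem_of_mem_erase hx
    have : x ∈ Γ.filter (fun x => (johnson n 3 1).Adj x v) :=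
      Finset.mem_filter.mpr ⟨hxΓ, hadj⟩
    rw [hfil, Finset.mem_singleton] at this
    exact (Finset.ne_of_mem_erase hx) this
  have key1 := key v₁ h1
  have key2 := key v₂ h2
  set Γ' : Finset {A : Finset (Fin n) // A.card = 3} :=
    insert v₁ (insert v₂ (Γ.erase u)) with hΓ'
  have hsub : Γ' ⊆ W := by
    intro x hx
    rcases Finset.mem_insert.mp hx with rfl | hx
    · exact (Finset.mem_sdiff.mp hv₁).1
    rcases Finset.mem_insert.mp hx with rfl | hx
    · exact (Finset.mem_sdiff.mp hv₂).1
    · exact hΓW (Finset.mem_of_mem_erase hx)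
  have hind' : IsIndep (johnson n 3 1) Γ' := by
    intro x hx y hy hadj
    simp only [hΓ', Finset.mem_insert] at hx hy
    rcases hx with rfl | rfl | hx <;> rcases hy with rfl | rfl | hy
    · exact (johnson n 3 1).loopless.irrefl _ hadj
    · exact hnadj' hadj
    · exact key1 _ hy hadj.symm
    · exact hnadj' hadj.symm
    · exact (johnson n 3 1).loopless.irrefl _ hadj
    · exact key2 _ hy hadj.symm
    · exact key1 _ hx hadj
    · exact key2 _ hx hadj
    · exact hind _ (Finset.mem_of_mem_erase hx) _ (Finset.mem_of_mem_erase hy) hadj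
  have hle := hmax Γ' hsub hind'
  have h2e : v₂ ∉ Γ.erase u := fun h => hv2Γ (Finset.mem_of_mem_erase h)
  have h1e : v₁ ∉ insert v₂ (Γ.erase u) := by
    intro h
    rcases Finset.mem_insert.mp h with h | h
    · exact hne h
    · exact hv1Γ (Finset.mem_of_mem_erase h)
  have hcard : Γ'.card = Γ.card + 1 := by
    rw [hΓ', Finset.card_insert_of_notMem h1e, Finset.card_insert_of_notMem h2e,
      Finset.card_erase_of_mem hu]
    have : 1 ≤ Γ.card := Finset.card_pos.mpr ⟨u, hu⟩
    omega
  omega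
end

section
/- Let r = 2s+1 and suppose α(G(n,r,s)) = (1+o(1)) · n^s · (2r−2s−1)!/(r!·(r−s−1)!). Let l : ℕ → ℕ satisfy l(n) = o(n^{2s+1}) and n^{2s} = o(l(n)). Then for every ε > 0, for all sufficiently large n, every set W of l(n) vertices of G(n,r,s) induces at least (1−ε) · (3/2) · l(n)² / α(G(n,r,s)) edges. -/
/-!
Peel off a maximum independent set `Γ` of `W`; it has at most `α` elements. By the hypothesis on
low-degree vertices, all but `C₁ n^{2s}` vertices of `W \ Γ` have at least three neighbours in `Γ`,
so `r(W) ≥ r(W \ Γ) + 3 (|W| - |Γ| - C₁ n^{2s})`. Iterating this gives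
`2 α r(W) ≥ 3 (|W| - D)²` with `D = C₁ n^{2s} + α`, and `D = o(l(n))` because `α = O(n^s)` and
`n^{2s} = o(l(n))`.
-/

open Finset Filter Topology

lemma succ_mul_card_sub_card_filter_le_sum {ι : Type*} (S : Finset ι) (f : ι → ℕ) (k : ℕ) :
    (k + 1) * (#S - #(S.filter (f · ≤ k))) ≤ ∑ i ∈ S, f i := by
  rw [← card_filter_add_card_filter_not (s := S) (fun i => f i ≤ k), Nat.add_sub_cancel_left,
    mul_comm, ← smul_eq_mul]
  calc #(S.filter fun i => ¬f i ≤ k) • (k + 1)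
      ≤ ∑ i ∈ S.filter (fun i => ¬f i ≤ k), f i :=
        card_nsmul_le_sum _ _ _ fun i hi => Nat.lt_of_not_le (mem_filter.mp hi).2
    _ ≤ ∑ i ∈ S, f i := sum_le_sum_of_subset (filter_subset _ _)

-- With `x = k - (B + a)`: `x² - (x - t)₊² ≤ 2 t x ≤ 2 a (x + a - t)`.
lemma sq_sub_le_sq_sub_add {a t : ℕ} (ht : t ≤ a) (k B : ℕ) :
    (k - (B + a)) ^ 2 ≤ (k - t - (B + a)) ^ 2 + 2 * a * (k - t - B) := by
  rcases le_total k (B + a) with hk | hk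
  · simp [Nat.sub_eq_zero_of_le hk]
  obtain ⟨x, rfl⟩ := Nat.exists_eq_add_of_le hk
  have hz : B + a + x - t - B = x + (a - t) := by omega
  rw [Nat.add_sub_cancel_left, hz]
  rcases le_total t x with htx | htx
  · obtain ⟨y, rfl⟩ := Nat.exists_eq_add_of_le htx
    have hy : B + a + (t + y) - t - (B + a) = y := by omega
    rw [hy]
    nlinarith
  · have hy : B + a + x - t - (B + a) = 0 := by omega
    rw [hy]
    nlinarith

namespace SimpleGraph

variable {V : Type*} (G : SimpleGraph V)

lemma isIndep_singleton (v : V) : IsIndep G {v} := by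
  simp [IsIndep]

lemma exists_maximum_isIndep_subset (W : Finset V) :
    ∃ Γ ⊆ W, IsIndep G Γ ∧ ∀ Γ' ⊆ W, IsIndep G Γ' → #Γ' ≤ #Γ := by
  classical
  obtain ⟨Γ, hΓ, hmax⟩ := exists_max_image (W.powerset.filter (IsIndep G)) card
    ⟨∅, by simp [IsIndep]⟩
  rw [mem_filter, mem_powerset] at hΓ
  exact ⟨Γ, hΓ.1, hΓ.2, fun Γ' h h' => hmax Γ' (by simp [h, h'])⟩

variable [DecidableRel G.Adj]

def adjPairs (W : Finset V) : Finset (V × V) :=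
  (W ×ˢ W).filter fun p => G.Adj p.1 p.2

def nbrCount (S : Finset V) (v : V) : ℕ :=
  #(S.filter (G.Adj · v))

lemma nbrCount_eq_sum (S : Finset V) (v : V) :
    G.nbrCount S v = ∑ u ∈ S, if G.Adj u v then 1 else 0 :=
  card_filter _ _

lemma card_adjPairs_eq_sum (W : Finset V) :
    #(G.adjPairs W) = ∑ v ∈ W, G.nbrCount W v := by
  rw [adjPairs, card_filter, sum_product, sum_comm]
  simp only [nbrCount_eq_sum]

lemma sum_nbrCount_comm (S T : Finset V) :
    ∑ v ∈ S, G.nbrCount T v = ∑ v ∈ T, G.nbrCount S v := by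
  simp only [nbrCount_eq_sum]
  rw [sum_comm]
  simp only [G.adj_comm]

variable [DecidableEq V]

lemma edgeCount_eq_card_adjPairs_div_two (W : Finset V) :
    edgeCount G W = #(G.adjPairs W) / 2 := rfl

lemma nbrCount_union {S T : Finset V} (h : Disjoint S T) (v : V) :
    G.nbrCount (S ∪ T) v = G.nbrCount S v + G.nbrCount T v := by
  simp only [nbrCount_eq_sum, sum_union h]

lemma card_adjPairs_sdiff_add_le {W Γ : Finset V} (hΓ : Γ ⊆ W) :
    #(G.adjPairs (W \ Γ)) + 2 * ∑ w ∈ W \ Γ, G.nbrCount Γ w ≤ #(G.adjPairs W) := by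
  have hd : Disjoint (W \ Γ) Γ := sdiff_disjoint
  conv_rhs => rw [card_adjPairs_eq_sum, ← sdiff_union_of_subset hΓ, sum_union hd]
  simp only [nbrCount_union G hd, sum_add_distrib, card_adjPairs_eq_sum]
  rw [G.sum_nbrCount_comm Γ (W \ Γ)]
  omega

lemma edgeCount_sdiff_add_le {W Γ : Finset V} (hΓ : Γ ⊆ W) :
    edgeCount G (W \ Γ) + ∑ w ∈ W \ Γ, G.nbrCount Γ w ≤ edgeCount G W := by
  have := G.card_adjPairs_sdiff_add_le hΓ
  simp only [edgeCount_eq_card_adjPairs_div_two]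
  omega

theorem three_mul_sq_sub_le_edgeCount {a B : ℕ} (ha : ∀ Γ, IsIndep G Γ → #Γ ≤ a)
    (hB : ∀ W Γ : Finset V, Γ ⊆ W → IsIndep G Γ →
      (∀ Γ' ⊆ W, IsIndep G Γ' → #Γ' ≤ #Γ) → #((W \ Γ).filter (G.nbrCount Γ · ≤ 2)) ≤ B)
    (W : Finset V) :
    3 * (#W - (B + a)) ^ 2 ≤ 2 * a * edgeCount G W := by
  induction W using Finset.strongInduction with
  | H W ih =>
    obtain rfl | ⟨w, hw⟩ := W.eq_empty_or_nonempty
    · simp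
    obtain ⟨Γ, hΓW, hΓ, hmax⟩ := G.exists_maximum_isIndep_subset W
    have hΓne : Γ.Nonempty :=
      card_pos.mp (hmax {w} (singleton_subset_iff.mpr hw) (G.isIndep_singleton w))
    have hta : #Γ ≤ a := ha Γ hΓ
    have hrest := ih (W \ Γ) (sdiff_ssubset hΓW hΓne)
    rw [card_sdiff_of_subset hΓW] at hrest
    have hnbr : 3 * (#W - #Γ - B) ≤ ∑ v ∈ W \ Γ, G.nbrCount Γ v := by
      have := succ_mul_card_sub_card_filter_le_sum (W \ Γ) (G.nbrCount Γ) 2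
      rw [card_sdiff_of_subset hΓW] at this
      have := hB W Γ hΓW hΓ hmax
      omega
    calc 3 * (#W - (B + a)) ^ 2
        ≤ 3 * (#W - #Γ - (B + a)) ^ 2 + 2 * a * (3 * (#W - #Γ - B)) := by
          linarith [sq_sub_le_sq_sub_add hta #W B]
      _ ≤ 2 * a * edgeCount G (W \ Γ) + 2 * a * ∑ v ∈ W \ Γ, G.nbrCount Γ v := by
          gcongr
      _ ≤ 2 * a * edgeCount G W := by
          rw [← mul_add]
          exact Nat.mul_le_mul_left _ (G.edgeCount_sdiff_add_le hΓW)

end SimpleGraph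

lemma eventually_le_mul_pow_of_tendsto_div {f : ℕ → ℝ} {s : ℕ} {K₁ K₂ : ℝ} (hK₁ : 0 < K₁)
    (hK₂ : 0 < K₂) (hf : Tendsto (fun n : ℕ => f n * K₁ / ((n : ℝ) ^ s * K₂)) atTop (𝓝 1)) :
    ∀ᶠ n : ℕ in atTop, f n ≤ 2 * K₂ / K₁ * (n : ℝ) ^ s := by
  filter_upwards [hf.eventually (eventually_lt_nhds one_lt_two), eventually_ge_atTop 1]
    with n hn hn1
  have hpos : (0 : ℝ) < (n : ℝ) ^ s * K₂ := by
    have : (0 : ℝ) < n := by exact_mod_cast hn1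
    positivity
  rw [div_lt_iff₀ hpos] at hn
  rw [div_mul_eq_mul_div, le_div_iff₀ hK₁]
  linarith

lemma tendsto_div_of_le_mul_pow {a l : ℕ → ℝ} {c : ℝ} {s t : ℕ} (hc : 0 ≤ c) (hst : s ≤ t)
    (ha₀ : ∀ n, 0 ≤ a n) (hl₀ : ∀ n, 0 ≤ l n) (ha : ∀ᶠ n : ℕ in atTop, a n ≤ c * (n : ℝ) ^ s)
    (hl : Tendsto (fun n : ℕ => (n : ℝ) ^ t / l n) atTop (𝓝 0)) :
    Tendsto (fun n => a n / l n) atTop (𝓝 0) := by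
  have hupper := hl.const_mul c
  rw [mul_zero] at hupper
  refine tendsto_of_tendsto_of_tendsto_of_le_of_le' tendsto_const_nhds hupper
    (Eventually.of_forall fun n => div_nonneg (ha₀ n) (hl₀ n)) ?_
  filter_upwards [ha, eventually_ge_atTop 1] with n hn hn1
  have hpow : (n : ℝ) ^ s ≤ (n : ℝ) ^ t := pow_le_pow_right₀ (by exact_mod_cast hn1) hst
  rw [← mul_div_assoc]
  exact div_le_div_of_nonneg_right (hn.trans (mul_le_mul_of_nonneg_left hpow hc)) (hl₀ n)

lemma le_of_three_mul_sq_sub_le {l D a e : ℕ} {δ ε : ℝ} (ha : 0 < a) (hδ : δ ≤ 1)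
    (hδε : 2 * δ ≤ ε) (hD : (D : ℝ) ≤ δ * l) (h : 3 * (l - D) ^ 2 ≤ 2 * a * e) :
    (1 - ε) * (3 / 2) * (l : ℝ) ^ 2 / a ≤ e := by
  have hl : (0 : ℝ) ≤ l := Nat.cast_nonneg l
  have hDl : D ≤ l := by
    have : (D : ℝ) ≤ l := hD.trans (by nlinarith)
    exact_mod_cast this
  have hcast : 3 * ((l : ℝ) - D) ^ 2 ≤ 2 * a * e := by
    rw [← Nat.cast_sub hDl]
    exact_mod_cast h
  have hsq : (1 - ε) * (l : ℝ) ^ 2 ≤ ((l : ℝ) - D) ^ 2 :=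
    calc (1 - ε) * (l : ℝ) ^ 2 ≤ ((1 - δ) * l) ^ 2 := by nlinarith [sq_nonneg (δ * l)]
      _ ≤ ((l : ℝ) - D) ^ 2 := by
        gcongr
        nlinarith
  rw [div_le_iff₀ (by exact_mod_cast ha)]
  linarith

theorem stmt12_general (r s : ℕ) (α : ℕ → ℕ)
    (hα_max : ∀ n, ∀ Γ : Finset {A : Finset (Fin n) // A.card = r},
      IsIndep (johnson n r s) Γ → Γ.card ≤ α n)
    (hα_asymp : Filter.Tendsto
      (fun n : ℕ => (α n : ℝ) * ((r.factorial : ℝ) * ((r - s - 1).factorial : ℝ))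
        / ((n : ℝ) ^ s * ((2 * r - 2 * s - 1).factorial : ℝ)))
      Filter.atTop (nhds 1))
    (l : ℕ → ℕ)
    (hl2 : Filter.Tendsto (fun n : ℕ => (n : ℝ) ^ (2 * s) / (l n : ℝ))
      Filter.atTop (nhds 0))
    (hlemma : ∃ C₁ : ℕ, ∀ n : ℕ, ∀ W Γ : Finset {A : Finset (Fin n) // A.card = r},
      Γ ⊆ W → IsIndep (johnson n r s) Γ →
      (∀ Γ' ⊆ W, IsIndep (johnson n r s) Γ' → Γ'.card ≤ Γ.card) →
      ((W \ Γ).filter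
          (fun w => (Γ.filter (fun x => (johnson n r s).Adj x w)).card ≤ 2)).card
        ≤ C₁ * n ^ (2 * s))
    (ε : ℝ) (hε : 0 < ε) :
    ∃ N : ℕ, ∀ n ≥ N, ∀ W : Finset {A : Finset (Fin n) // A.card = r},
      W.card = l n →
      (1 - ε) * (3 / 2) * (l n : ℝ) ^ 2 / (α n : ℝ)
        ≤ (edgeCount (johnson n r s) W : ℝ) := by
  obtain ⟨C₁, hC₁⟩ := hlemma
  have hα_le := eventually_le_mul_pow_of_tendsto_div (by positivity) (by positivity) hα_asymp
  have hD : Tendsto (fun n => ((C₁ * n ^ (2 * s) + α n : ℕ) : ℝ) / l n) atTop (𝓝 0) := by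
    have := (hl2.const_mul (C₁ : ℝ)).add (tendsto_div_of_le_mul_pow (by positivity) (by omega)
      (fun n => (α n).cast_nonneg) (fun n => (l n).cast_nonneg) hα_le hl2)
    simpa [add_div, mul_div_assoc] using this
  set δ := min (ε / 2) 1
  have hδ : 0 < δ := lt_min (half_pos hε) one_pos
  obtain ⟨N, hN⟩ := eventually_atTop.mp (hD.eventually (eventually_le_nhds hδ))
  refine ⟨N, fun n hn W hW => ?_⟩
  obtain hl0 | hl := (l n).eq_zero_or_pos
  · simp [hl0]
  obtain ⟨w, hw⟩ : W.Nonempty := card_pos.mp (hW ▸ hl)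
  refine le_of_three_mul_sq_sub_le (hα_max n {w} ((johnson n r s).isIndep_singleton w))
    (min_le_right _ _) (by linarith [min_le_left (ε / 2) 1])
    ((div_le_iff₀ (by exact_mod_cast hl)).mp (hN n hn)) ?_
  rw [← hW]
  exact (johnson n r s).three_mul_sq_sub_le_edgeCount (hα_max n) (hC₁ n) W

theorem stmt12 (r s : ℕ) (hr : r = 2 * s + 1) (α : ℕ → ℕ)
    (hα_ex : ∀ n, ∃ Γ : Finset {A : Finset (Fin n) // A.card = r},
      IsIndep (johnson n r s) Γ ∧ Γ.card = α n)
    (hα_max : ∀ n, ∀ Γ : Finset {A : Finset (Fin n) // A.card = r},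
      IsIndep (johnson n r s) Γ → Γ.card ≤ α n)
    (hα_asymp : Filter.Tendsto
      (fun n : ℕ => (α n : ℝ) * ((r.factorial : ℝ) * ((r - s - 1).factorial : ℝ))
        / ((n : ℝ) ^ s * ((2 * r - 2 * s - 1).factorial : ℝ)))
      Filter.atTop (nhds 1))
    (l : ℕ → ℕ)
    (hl1 : Filter.Tendsto (fun n : ℕ => (l n : ℝ) / (n : ℝ) ^ (2 * s + 1))
      Filter.atTop (nhds 0))
    (hl2 : Filter.Tendsto (fun n : ℕ => (n : ℝ) ^ (2 * s) / (l n : ℝ))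
      Filter.atTop (nhds 0))
    (hlemma : ∃ C₁ : ℕ, ∀ n : ℕ, ∀ W Γ : Finset {A : Finset (Fin n) // A.card = r},
      Γ ⊆ W → IsIndep (johnson n r s) Γ →
      (∀ Γ' ⊆ W, IsIndep (johnson n r s) Γ' → Γ'.card ≤ Γ.card) →
      ((W \ Γ).filter
          (fun w => (Γ.filter (fun x => (johnson n r s).Adj x w)).card ≤ 2)).card
        ≤ C₁ * n ^ (2 * s))
    (ε : ℝ) (hε : 0 < ε) :
    ∃ N : ℕ, ∀ n ≥ N, ∀ W : Finset {A : Finset (Fin n) // A.card = r},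
      W.card = l n →
      (1 - ε) * (3 / 2) * (l n : ℝ) ^ 2 / (α n : ℝ)
        ≤ (edgeCount (johnson n r s) W : ℝ) :=
  stmt12_general r s α hα_max hα_asymp l hl2 hlemma ε hε
end

section
/- Fix r = 2s+1. Let Γ be a maximum independent set in the induced subgraph of G(n,r,s) on W, let u₁, u₂ ∈ Γ, and let w ∈ W \ Γ be adjacent to both u₁ and u₂ with |(supp(u₁) ∪ supp(u₂)) ∩ supp(w)| = k where k ≥ s+1. Then the number of such vertices w (for the fixed pair u₁, u₂) is at most 2·r·C(r,s), where C(r,s) is 'r choose s'. -/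
/-!
Call `w` a centre if its only neighbours in `Γ` are `u₁` and `u₂`. Pairwise non-adjacent centres
can replace `u₁, u₂` in `Γ`, so by maximality of `Γ` there are at most two of them. A centre `w`
meets `supp u₁` in an `s`-set `T` and, as `|(supp u₁ ∪ supp u₂) ∩ supp w| ≥ s + 1`, contains some
`m ∈ supp u₂ \ supp u₁`; two centres sharing `(T, m)` meet in at least `s + 1` points and so are
non-adjacent. There are at most `C(r, s) · r` such pairs `(T, m)`, each shared by at most two
centres.
-/

open Finset

namespace IsIndep

variable {V : Type*} {G : SimpleGraph V}

theorem mono_s13 {A B : Finset V} (hB : IsIndep G B) (hAB : A ⊆ B) : IsIndep G A :=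
  fun x hx y hy => hB x (hAB hx) y (hAB hy)

theorem union [DecidableEq V] {A B : Finset V} (hA : IsIndep G A) (hB : IsIndep G B)
    (hAB : ∀ x ∈ A, ∀ y ∈ B, ¬ G.Adj x y) : IsIndep G (A ∪ B) := by
  intro x hx y hy hxy
  rcases mem_union.1 hx with hx | hx <;> rcases mem_union.1 hy with hy | hy
  · exact hA x hx y hy hxy
  · exact hAB x hx y hy hxy
  · exact hAB y hy x hx hxy.symm
  · exact hB x hx y hy hxy

/-- Swapping `T` in for `Γ ∩ U` leaves an independent subset of `W`. -/
theorem card_le_card_of_swap [DecidableEq V] {W Γ T U : Finset V} (hΓW : Γ ⊆ W)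
    (hind : IsIndep G Γ) (hmax : ∀ Γ' ⊆ W, IsIndep G Γ' → #Γ' ≤ #Γ)
    (hTW : T ⊆ W \ Γ) (hT : IsIndep G T) (hTU : ∀ x ∈ Γ, ∀ w ∈ T, G.Adj x w → x ∈ U) :
    #T ≤ #U := by
  have hdisj : Disjoint (Γ \ U) T :=
    disjoint_left.2 fun x hx hxT => (mem_sdiff.1 (hTW hxT)).2 (mem_sdiff.1 hx).1
  have hswap : IsIndep G (Γ \ U ∪ T) :=
    (hind.mono_s13 sdiff_subset).union hT fun x hx w hw hxw =>
      (mem_sdiff.1 hx).2 (hTU x (mem_sdiff.1 hx).1 w hw hxw)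
  have hle := hmax _ (union_subset (sdiff_subset.trans hΓW) (hTW.trans sdiff_subset)) hswap
  rw [card_union_of_disjoint hdisj] at hle
  have := card_le_card_sdiff_add_card (s := Γ) (t := U)
  omega

end IsIndep

theorem exists_mem_sdiff_of_card_inter_lt {α : Type*} [DecidableEq α] {A B w : Finset α}
    (h : #(A ∩ w) < #((A ∪ B) ∩ w)) : ∃ m ∈ B \ A, m ∈ w := by
  by_contra! hB
  have hsub : (A ∪ B) ∩ w ⊆ A ∩ w := by
    intro m hm
    obtain ⟨hAB, hw⟩ := mem_inter.1 hm
    by_cases hA : m ∈ A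
    · exact mem_inter.2 ⟨hA, hw⟩
    · exact absurd hw (hB m (mem_sdiff.2 ⟨(mem_union.1 hAB).resolve_left hA, hA⟩))
  exact (card_le_card hsub).not_gt h

theorem johnson_not_adj_of_inter_eq {n r s : ℕ} {x y : {A : Finset (Fin n) // #A = r}}
    {A : Finset (Fin n)} {m : Fin n} (hA : #(A ∩ x.1) = s) (hxy : A ∩ x.1 = A ∩ y.1)
    (hm : m ∉ A) (hmx : m ∈ x.1) (hmy : m ∈ y.1) : ¬ (johnson n r s).Adj x y := by
  intro hadj
  have hsub : insert m (A ∩ x.1) ⊆ x.1 ∩ y.1 := by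
    refine insert_subset (mem_inter.2 ⟨hmx, hmy⟩) fun a ha => mem_inter.2 ⟨?_, ?_⟩
    · exact (mem_inter.1 ha).2
    · exact (mem_inter.1 (hxy ▸ ha)).2
  have hcard := card_le_card hsub
  rw [card_insert_of_notMem fun h => hm (mem_inter.1 h).1, hA, hadj.2] at hcard
  omega

theorem johnson_isIndep_filter_inter_eq {n r s : ℕ} (S : Finset {A : Finset (Fin n) // #A = r})
    {A T : Finset (Fin n)} {m : Fin n} (hT : #T = s) (hm : m ∉ A) :
    IsIndep (johnson n r s) (S.filter fun w => A ∩ w.1 = T ∧ m ∈ w.1) := by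
  intro x hx y hy
  obtain ⟨-, hxT, hmx⟩ := mem_filter.1 hx
  obtain ⟨-, hyT, hmy⟩ := mem_filter.1 hy
  exact johnson_not_adj_of_inter_eq (hxT ▸ hT) (hxT.trans hyT.symm) hm hmx hmy

theorem stmt13_general (n r s : ℕ)
    (W Γ : Finset {A : Finset (Fin n) // A.card = r})
    (hΓW : Γ ⊆ W) (hind : IsIndep (johnson n r s) Γ)
    (hmax : ∀ Γ' ⊆ W, IsIndep (johnson n r s) Γ' → Γ'.card ≤ Γ.card)
    (u₁ u₂ : {A : Finset (Fin n) // A.card = r}) :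
    ((W \ Γ).filter
        (fun w => Γ.filter (fun x => (johnson n r s).Adj x w) = {u₁, u₂}
          ∧ s + 1 ≤ ((u₁.1 ∪ u₂.1) ∩ w.1).card)).card
      ≤ 2 * r * Nat.choose r s := by
  set S := (W \ Γ).filter
    (fun w => Γ.filter (fun x => (johnson n r s).Adj x w) = {u₁, u₂}
      ∧ s + 1 ≤ ((u₁.1 ∪ u₂.1) ∩ w.1).card)
  have hnbr : ∀ w ∈ S, ∀ x ∈ Γ, (johnson n r s).Adj x w → x ∈ ({u₁, u₂} : Finset _) :=
    fun w hw x hx hxw => (mem_filter.1 hw).2.1 ▸ mem_filter.2 ⟨hx, hxw⟩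
  have hcard₁ : ∀ w ∈ S, #(u₁.1 ∩ w.1) = s := fun w hw =>
    (mem_filter.1 ((mem_filter.1 hw).2.1 ▸ mem_insert_self u₁ {u₂})).2.2
  let I := u₁.1.powersetCard s ×ˢ (u₂.1 \ u₁.1)
  let centresAt (p : Finset (Fin n) × Fin n) := S.filter fun w => u₁.1 ∩ w.1 = p.1 ∧ p.2 ∈ w.1
  have hcover : S ⊆ I.biUnion centresAt := by
    intro w hw
    obtain ⟨m, hm, hmw⟩ := exists_mem_sdiff_of_card_inter_lt (B := u₂.1)
      ((hcard₁ w hw).trans_lt (mem_filter.1 hw).2.2)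
    exact mem_biUnion.2 ⟨(u₁.1 ∩ w.1, m),
      mem_product.2 ⟨mem_powersetCard.2 ⟨inter_subset_left, hcard₁ w hw⟩, hm⟩,
      mem_filter.2 ⟨hw, rfl, hmw⟩⟩
  have hcentresAt : ∀ p ∈ I, #(centresAt p) ≤ 2 := by
    rintro ⟨T, m⟩ hp
    obtain ⟨hT, hm⟩ := mem_product.1 hp
    exact (IsIndep.card_le_card_of_swap hΓW hind hmax
      ((filter_subset _ _).trans (filter_subset _ _))
      (johnson_isIndep_filter_inter_eq S (mem_powersetCard.1 hT).2 (mem_sdiff.1 hm).2)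
      fun x hx w hw => hnbr w (mem_filter.1 hw).1 x hx).trans card_le_two
  calc #S ≤ #I * 2 := (card_le_card hcover).trans (card_biUnion_le_card_mul _ _ _ hcentresAt)
    _ = Nat.choose r s * #(u₂.1 \ u₁.1) * 2 := by
      rw [card_product, card_powersetCard, u₁.2]
    _ ≤ Nat.choose r s * r * 2 := by
      gcongr
      exact (card_le_card sdiff_subset).trans_eq u₂.2
    _ = 2 * r * Nat.choose r s := by ring

theorem stmt13 (n r s : ℕ) (hr : r = 2 * s + 1)
    (W Γ : Finset {A : Finset (Fin n) // A.card = r})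
    (hΓW : Γ ⊆ W) (hind : IsIndep (johnson n r s) Γ)
    (hmax : ∀ Γ' ⊆ W, IsIndep (johnson n r s) Γ' → Γ'.card ≤ Γ.card)
    (u₁ u₂ : {A : Finset (Fin n) // A.card = r})
    (hu₁ : u₁ ∈ Γ) (hu₂ : u₂ ∈ Γ) (hne : u₁ ≠ u₂) :
    ((W \ Γ).filter
        (fun w => Γ.filter (fun x => (johnson n r s).Adj x w) = {u₁, u₂}
          ∧ s + 1 ≤ ((u₁.1 ∪ u₂.1) ∩ w.1).card)).card
      ≤ 2 * r * Nat.choose r s :=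
  stmt13_general n r s W Γ hΓW hind hmax u₁ u₂
end

section
/- Fix r = 2s+1. Let Γ be a maximum independent set in the induced subgraph of G(n,r,s) on W. For fixed u₁, u₂ ∈ Γ and for each fixed s-element set S = supp(w) ∩ (supp(u₁) ∪ supp(u₂)) in the case |(supp(u₁) ∪ supp(u₂)) ∩ supp(w)| = s, the number of vertices w ∈ W \ Γ adjacent in Γ exactly to u₁ and u₂ with that intersection pattern is at most 2n. -/
/-! Every `w` in the family contains `S`, and `w ⊄ S` since `|w| = 2s + 1 > s`, so it suffices
to show that each point `x ∉ S` lies in at most two of them. Any three such `w` containing `x`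
pairwise meet in at least `S ∪ {x}`, of size `s + 1`, so they are pairwise non-adjacent; being
adjacent to no vertex of `Γ` besides `u₁, u₂`, they could replace `{u₁, u₂}` in `Γ` and give a
larger independent subset of `W`. -/

open Finset

section Exchange

variable {V : Type*} [DecidableEq V] {G : SimpleGraph V}

theorem isIndep_union {A B : Finset V} (hA : IsIndep G A) (hB : IsIndep G B)
    (hAB : ∀ a ∈ A, ∀ b ∈ B, ¬ G.Adj a b) : IsIndep G (A ∪ B) := by
  intro x hx y hy
  rcases mem_union.1 hx with hx | hx <;> rcases mem_union.1 hy with hy | hy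
  · exact hA x hx y hy
  · exact hAB x hx y hy
  · exact fun h => hAB y hy x hx h.symm
  · exact hB x hx y hy

theorem card_le_card_of_isIndep_union_sdiff {W Γ X T : Finset V} (hΓW : Γ ⊆ W)
    (hmax : ∀ Γ' ⊆ W, IsIndep G Γ' → Γ'.card ≤ Γ.card)
    (hXW : X ⊆ W) (hXΓ : Disjoint X Γ) (hX : IsIndep G (X ∪ (Γ \ T))) :
    X.card ≤ T.card := by
  have hle := hmax _ (union_subset hXW (sdiff_subset.trans hΓW)) hX
  rw [card_union_of_disjoint (hXΓ.mono_right sdiff_subset)] at hle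
  have := le_card_sdiff T Γ
  omega

theorem not_adj_of_filter_adj_eq [DecidableRel G.Adj] {Γ T : Finset V} {w b : V}
    (h : Γ.filter (G.Adj · w) = T) (hb : b ∈ Γ \ T) : ¬ G.Adj b w := fun hadj =>
  (mem_sdiff.1 hb).2 (h ▸ mem_filter.2 ⟨(mem_sdiff.1 hb).1, hadj⟩)

end Exchange

theorem isIndep_johnson_of_subset_inter {n r s : ℕ} {X : Finset {A : Finset (Fin n) // A.card = r}}
    {T : Finset (Fin n)} (hT : s < T.card) (hX : ∀ w ∈ X, T ⊆ w.1) :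
    IsIndep (johnson n r s) X := fun _ hA _ hB hadj =>
  (hT.trans_le (card_le_card (subset_inter (hX _ hA) (hX _ hB)))).ne' hadj.2

theorem stmt14_general (n r s : ℕ) (hr : r = 2 * s + 1)
    (W Γ : Finset {A : Finset (Fin n) // A.card = r})
    (hΓW : Γ ⊆ W) (hind : IsIndep (johnson n r s) Γ)
    (hmax : ∀ Γ' ⊆ W, IsIndep (johnson n r s) Γ' → Γ'.card ≤ Γ.card)
    (u₁ u₂ : {A : Finset (Fin n) // A.card = r})
    (S : Finset (Fin n)) (hS : S.card = s) :
    ((W \ Γ).filter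
        (fun w => Γ.filter (fun x => (johnson n r s).Adj x w) = {u₁, u₂}
          ∧ (u₁.1 ∪ u₂.1) ∩ w.1 = S)).card
      ≤ 2 * n := by
  set F := (W \ Γ).filter
    (fun w => Γ.filter (fun x => (johnson n r s).Adj x w) = {u₁, u₂} ∧ (u₁.1 ∪ u₂.1) ∩ w.1 = S)
  have hSF : ∀ w ∈ F, S ⊆ w.1 := fun w hw =>
    (mem_filter.1 hw).2.2 ▸ inter_subset_right
  let X (x : Fin n) := F.filter (fun w => x ∈ w.1 \ S)
  have hXF (x : Fin n) : X x ⊆ F := filter_subset _ _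
  have hX (x : Fin n) : (X x).card ≤ 2 := by
    by_cases hxS : x ∈ S
    · simp [X, hxS]
    refine (card_le_card_of_isIndep_union_sdiff hΓW hmax (T := {u₁, u₂}) ?_ ?_ ?_).trans
      card_le_two
    · exact (hXF x).trans ((filter_subset _ _).trans sdiff_subset)
    · exact disjoint_left.2 fun w hw => (mem_sdiff.1 (mem_filter.1 (hXF x hw)).1).2
    refine isIndep_union ?_ (fun a ha b hb => hind a (mem_sdiff.1 ha).1 b (mem_sdiff.1 hb).1)
      fun w hw b hb hadj => not_adj_of_filter_adj_eq (mem_filter.1 (hXF x hw)).2.1 hb hadj.symm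
    refine isIndep_johnson_of_subset_inter (T := insert x S) (by simp [hxS, hS]) fun w hw => ?_
    exact insert_subset (mem_sdiff.1 (mem_filter.1 hw).2).1 (hSF w (hXF x hw))
  have hcover : F ⊆ univ.biUnion X := fun w hw => by
    obtain ⟨x, hxw, hxS⟩ :=
      exists_mem_notMem_of_card_lt_card (s := S) (t := w.1) (by rw [hS, w.2, hr]; omega)
    exact mem_biUnion.2 ⟨x, mem_univ x, mem_filter.2 ⟨hw, mem_sdiff.2 ⟨hxw, hxS⟩⟩⟩
  calc F.card ≤ (univ.biUnion X).card := card_le_card hcover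
    _ ≤ ∑ x, (X x).card := card_biUnion_le
    _ ≤ 2 * n := by simpa [mul_comm] using sum_le_card_nsmul univ _ 2 fun x _ => hX x

theorem stmt14 (n r s : ℕ) (hr : r = 2 * s + 1)
    (W Γ : Finset {A : Finset (Fin n) // A.card = r})
    (hΓW : Γ ⊆ W) (hind : IsIndep (johnson n r s) Γ)
    (hmax : ∀ Γ' ⊆ W, IsIndep (johnson n r s) Γ' → Γ'.card ≤ Γ.card)
    (u₁ u₂ : {A : Finset (Fin n) // A.card = r})
    (hu₁ : u₁ ∈ Γ) (hu₂ : u₂ ∈ Γ) (hne : u₁ ≠ u₂)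
    (S : Finset (Fin n)) (hS : S.card = s) :
    ((W \ Γ).filter
        (fun w => Γ.filter (fun x => (johnson n r s).Adj x w) = {u₁, u₂}
          ∧ (u₁.1 ∪ u₂.1) ∩ w.1 = S)).card
      ≤ 2 * n :=
  stmt14_general n r s hr W Γ hΓW hind hmax u₁ u₂ S hS
end

section
/- Let G be a finite graph with independence number α, and W ⊆ V(G) with |W| = l. Suppose that for every subset W' ⊆ W and every maximum independent set Γ of the induced subgraph on W', at most M vertices of W' \ Γ have fewer than 3 neighbors in Γ, while every vertex of W' \ Γ has at least 1 neighbor in Γ. Then r(W) ≥ (3/2)·(l/α − 1)·l − 3l − 2M·(l/α). -/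
/-!
Peel off a maximum independent set `Γ` of the current set `W'`. Since `Γ` is independent, the edges
lost are exactly those between `Γ` and `W' \ Γ`; every vertex of `W' \ Γ` sends at least one edge
into `Γ` and all but `M` of them send at least three, so at least `3 |W' \ Γ| - 2M ≥ 3 (|W'| - α) - 2M`
edges are lost. Doing this `k = ⌊l / α⌋` times and summing the arithmetic progression gives the bound.
-/

open Finset

lemma three_mul_card_le_sum_add_two_mul {ι : Type*} {s : Finset ι} {f : ι → ℕ} {M : ℕ}
    (hpos : ∀ i ∈ s, 1 ≤ f i) (hfew : #{i ∈ s | f i < 3} ≤ M) :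
    3 * #s ≤ ∑ i ∈ s, f i + 2 * M := by
  calc 3 * #s = ∑ i ∈ s, 3 := by rw [sum_const, smul_eq_mul, mul_comm]
    _ ≤ ∑ i ∈ s, (f i + 2 * if f i < 3 then 1 else 0) :=
        sum_le_sum fun i hi => by have := hpos i hi; split_ifs <;> omega
    _ = ∑ i ∈ s, f i + 2 * #{i ∈ s | f i < 3} := by rw [sum_add_distrib, ← mul_sum, card_filter]
    _ ≤ ∑ i ∈ s, f i + 2 * M := by gcongr

namespace SimpleGraph

variable {V : Type*} (G : SimpleGraph V) [DecidableRel G.Adj]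

lemma card_interedges_union_left [DecidableEq V] {s₁ s₂ : Finset V} (h : Disjoint s₁ s₂)
    (t : Finset V) :
    #(G.interedges (s₁ ∪ s₂) t) = #(G.interedges s₁ t) + #(G.interedges s₂ t) := by
  rw [← card_union_of_disjoint (G.interedges_disjoint_left h t), interedges_def, interedges_def,
    interedges_def, union_product, filter_union]

lemma card_interedges_union_right [DecidableEq V] (s : Finset V) {t₁ t₂ : Finset V}
    (h : Disjoint t₁ t₂) :
    #(G.interedges s (t₁ ∪ t₂)) = #(G.interedges s t₁) + #(G.interedges s t₂) := by
  rw [← card_union_of_disjoint (G.interedges_disjoint_right s h), interedges_def, interedges_def,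
    interedges_def, product_union, filter_union]

lemma card_interedges_comm (s t : Finset V) : #(G.interedges s t) = #(G.interedges t s) :=
  have := G.symm
  Rel.card_interedges_comm s t

lemma card_interedges_eq_sum_card_filter (s t : Finset V) :
    #(G.interedges s t) = ∑ y ∈ t, #{x ∈ s | G.Adj x y} := by
  rw [interedges_def, card_filter, sum_product_right]
  exact sum_congr rfl fun y _ => (card_filter _ _).symm

end SimpleGraph

lemma IsIndep.interedges_self_eq_empty {V : Type*} {G : SimpleGraph V} [DecidableRel G.Adj]
    {Γ : Finset V} (hΓ : IsIndep G Γ) : G.interedges Γ Γ = ∅ :=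
  filter_eq_empty_iff.2 fun p hp => hΓ p.1 (mem_product.1 hp).1 p.2 (mem_product.1 hp).2

section EdgeCount

variable {V : Type*} [DecidableEq V] {G : SimpleGraph V} [DecidableRel G.Adj]

lemma edgeCount_eq_edgeCount_sdiff_add_sum {W Γ : Finset V} (hΓW : Γ ⊆ W) (hΓ : IsIndep G Γ) :
    edgeCount G W = edgeCount G (W \ Γ) + ∑ w ∈ W \ Γ, #{x ∈ Γ | G.Adj x w} := by
  have hdisj : Disjoint Γ (W \ Γ) := disjoint_sdiff
  have hcard : #(G.interedges W W)
      = #(G.interedges (W \ Γ) (W \ Γ)) + 2 * ∑ w ∈ W \ Γ, #{x ∈ Γ | G.Adj x w} := by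
    conv_lhs => rw [← union_sdiff_of_subset hΓW]
    rw [G.card_interedges_union_left hdisj,
      G.card_interedges_union_right _ hdisj, G.card_interedges_union_right _ hdisj,
      hΓ.interedges_self_eq_empty, G.card_interedges_comm (W \ Γ) Γ,
      G.card_interedges_eq_sum_card_filter Γ, card_empty]
    ring
  rw [edgeCount, edgeCount, ← G.interedges_def, ← G.interedges_def, hcard,
    Nat.add_mul_div_left _ _ two_pos]

lemma IsIndep.edgeCount_sdiff_add_three_mul_card_le {W Γ : Finset V} (hΓ : IsIndep G Γ)
    (hΓW : Γ ⊆ W) {M : ℕ} (hfew : #{w ∈ W \ Γ | #{x ∈ Γ | G.Adj x w} < 3} ≤ M)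
    (hpos : ∀ w ∈ W \ Γ, 1 ≤ #{x ∈ Γ | G.Adj x w}) :
    edgeCount G (W \ Γ) + 3 * #(W \ Γ) ≤ edgeCount G W + 2 * M := by
  have := three_mul_card_le_sum_add_two_mul hpos hfew
  rw [edgeCount_eq_edgeCount_sdiff_add_sum hΓW hΓ]
  omega

end EdgeCount

lemma exists_isIndep_subset_card_maximal {V : Type*} (G : SimpleGraph V) (W : Finset V) :
    ∃ Γ ⊆ W, IsIndep G Γ ∧ ∀ Γ' ⊆ W, IsIndep G Γ' → #Γ' ≤ #Γ := by
  classical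
  obtain ⟨Γ, hΓ, hmax⟩ := exists_max_image {Γ ∈ W.powerset | IsIndep G Γ} card
    ⟨∅, mem_filter.2 ⟨empty_mem_powerset W, by simp [IsIndep]⟩⟩
  rw [mem_filter, mem_powerset] at hΓ
  exact ⟨Γ, hΓ.1, hΓ.2, fun Γ' hΓ'W hΓ' => hmax Γ' (mem_filter.2 ⟨mem_powerset.2 hΓ'W, hΓ'⟩)⟩

/-- The bound is `∑_{i=1}^{k} (3 (|W'| - i α) - 2M)`: before the `i`-th peeling at most `(i - 1) α`
vertices are gone, so it removes at least the `i`-th summand. -/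
lemma le_edgeCount_of_peeling {V : Type*} [DecidableEq V] (G : SimpleGraph V) [DecidableRel G.Adj]
    (α M : ℕ) (hα_max : ∀ Γ : Finset V, IsIndep G Γ → #Γ ≤ α) (W : Finset V)
    (hM : ∀ W' ⊆ W, ∀ Γ ⊆ W', IsIndep G Γ →
      (∀ Γ' ⊆ W', IsIndep G Γ' → #Γ' ≤ #Γ) →
      #{w ∈ W' \ Γ | #{x ∈ Γ | G.Adj x w} < 3} ≤ M ∧ ∀ w ∈ W' \ Γ, 1 ≤ #{x ∈ Γ | G.Adj x w})
    (k : ℕ) {W' : Finset V} (hW' : W' ⊆ W) :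
    3 * k * (#W' : ℝ) - 3 / 2 * α * (k * (k + 1)) - 2 * M * k ≤ edgeCount G W' := by
  induction k generalizing W' with
  | zero => simp
  | succ k ih =>
    obtain ⟨Γ, hΓW', hΓ, hΓmax⟩ := exists_isIndep_subset_card_maximal G W'
    obtain ⟨hfew, hpos⟩ := hM W' hW' Γ hΓW' hΓ hΓmax
    have hstep : (edgeCount G (W' \ Γ) : ℝ) + 3 * #(W' \ Γ) ≤ edgeCount G W' + 2 * M := by
      exact_mod_cast hΓ.edgeCount_sdiff_add_three_mul_card_le hΓW' hfew hpos
    have hrest : (#W' : ℝ) - α ≤ #(W' \ Γ) := by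
      have : #W' ≤ #(W' \ Γ) + α := by
        rw [card_sdiff_of_subset hΓW']
        have := hα_max Γ hΓ
        omega
      rw [sub_le_iff_le_add]
      exact_mod_cast this
    have ih' := ih (W' := W' \ Γ) (sdiff_subset.trans hW')
    push_cast
    nlinarith [mul_le_mul_of_nonneg_left hrest (by positivity : (0 : ℝ) ≤ k)]

lemma peeling_bound_le_floor (α M l : ℕ) :
    (3 / 2 : ℝ) * ((l : ℝ) / α - 1) * l - 3 * l - 2 * M * ((l : ℝ) / α)
      ≤ 3 * (l / α : ℕ) * (l : ℝ) - 3 / 2 * α * ((l / α : ℕ) * ((l / α : ℕ) + 1))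
        - 2 * M * (l / α : ℕ) := by
  rcases Nat.eq_zero_or_pos α with rfl | hα
  · simp only [CharP.cast_eq_zero, div_zero, Nat.div_zero]
    nlinarith [(Nat.cast_nonneg l : (0 : ℝ) ≤ l)]
  -- with `t = l / α` and `s = t - ⌊t⌋ ∈ [0, 1)`, the difference is `α (3/2 s (1 - s) + 3 t) + 2 M s`
  set k := l / α
  set t : ℝ := (l : ℝ) / α
  have hα' : (0 : ℝ) < α := Nat.cast_pos.2 hα
  have hl : (l : ℝ) = t * α := (div_mul_cancel₀ _ hα'.ne').symm
  have hkt : (k : ℝ) ≤ t := by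
    rw [le_div_iff₀ hα']; exact_mod_cast Nat.div_mul_le_self l α
  have htk : t < k + 1 := by
    rw [div_lt_iff₀ hα']; exact_mod_cast Nat.lt_succ_self k |> (Nat.div_lt_iff_lt_mul hα).1
  have ht : 0 ≤ t := by positivity
  rw [hl]
  nlinarith [mul_nonneg (mul_nonneg hα'.le (sub_nonneg.2 hkt)) (sub_nonneg.2 htk.le),
    mul_nonneg (Nat.cast_nonneg M : (0 : ℝ) ≤ M) (sub_nonneg.2 hkt), mul_nonneg hα'.le ht]

theorem stmt16_general {V : Type*} [DecidableEq V] (G : SimpleGraph V)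
    [DecidableRel G.Adj] (α M l : ℕ)
    (hα_max : ∀ Γ : Finset V, IsIndep G Γ → Γ.card ≤ α)
    (W : Finset V) (hW : W.card = l)
    (hM : ∀ W' ⊆ W, ∀ Γ ⊆ W', IsIndep G Γ →
      (∀ Γ' ⊆ W', IsIndep G Γ' → Γ'.card ≤ Γ.card) →
      ((W' \ Γ).filter (fun w => (Γ.filter (fun x => G.Adj x w)).card < 3)).card ≤ M
        ∧ ∀ w ∈ W' \ Γ, 1 ≤ (Γ.filter (fun x => G.Adj x w)).card) :
    (3 / 2 : ℝ) * ((l : ℝ) / (α : ℝ) - 1) * l - 3 * l - 2 * M * ((l : ℝ) / (α : ℝ))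
      ≤ (edgeCount G W : ℝ) := by
  have hpeel := le_edgeCount_of_peeling G α M hα_max W hM (l / α) subset_rfl
  rw [hW] at hpeel
  exact (peeling_bound_le_floor α M l).trans hpeel

theorem stmt16 {V : Type*} [Fintype V] [DecidableEq V] (G : SimpleGraph V)
    [DecidableRel G.Adj] (α M l : ℕ) (hα_pos : 0 < α)
    (hα_ex : ∃ Γ : Finset V, IsIndep G Γ ∧ Γ.card = α)
    (hα_max : ∀ Γ : Finset V, IsIndep G Γ → Γ.card ≤ α)
    (W : Finset V) (hW : W.card = l)
    (hM : ∀ W' ⊆ W, ∀ Γ ⊆ W', IsIndep G Γ →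
      (∀ Γ' ⊆ W', IsIndep G Γ' → Γ'.card ≤ Γ.card) →
      ((W' \ Γ).filter (fun w => (Γ.filter (fun x => G.Adj x w)).card < 3)).card ≤ M
        ∧ ∀ w ∈ W' \ Γ, 1 ≤ (Γ.filter (fun x => G.Adj x w)).card) :
    (3 / 2 : ℝ) * ((l : ℝ) / (α : ℝ) - 1) * l - 3 * l - 2 * M * ((l : ℝ) / (α : ℝ))
      ≤ (edgeCount G W : ℝ) :=
  stmt16_general G α M l hα_max W hW hM
end
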